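/- arXiv:math/0501186 — 4 statements merged into one kernel-verified Lean document; each statement's English description precedes it below -/
import Mathlib

section
/- For all natural numbers k and l, the following identity holds: Σ_{j=0}^{l} [l choose j]_q (-1)^j (a*_{k+j+1}/[k+j+1]_q) q^{j(j+1)/2 - l(k+j+1)} + Σ_{j=0}^{k} [k choose j]_q (-1)^j (a_{l+j+1}/[l+j+1]_q) q^{j(j+1)/2} = a_0 / ([k+l+1]_q · [k+l choose k]_q). -/
/-!
Both sums on the left, viewed as functions `X k l`, satisfy
`q^(k+1) X k (l+1) = X k l - X (k+1) l`: for the first sum this is the q-Pascal rule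
`[n+1, j] = q^j [n, j] + [n, j-1]` applied in `l`, for the second the rule
`[n+1, j] = [n, j] + q^(n+1-j) [n, j-1]` applied in `k`. The right-hand side is `a₀` times the
q-Beta value `B_q(k+1, l+1)`, which satisfies the same recurrence (the q-analogue of
`B(x, y) = B(x+1, y) + B(x, y+1)`). As `q ≠ 0`, the recurrence determines `X` from the values
`X k 0`, and at `l = 0` the identity is the definition of `a*_{k+1}`, rewritten with the
absorption identity `[k+1, j+1] [j+1] = [k+1] [k, j]`.
-/

open Finset

/-- The q-Pochhammer symbol `(a;q)_n = ∏_{j=0}^{n-1} (1 - a q^j)`. -/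
def qPoch {F : Type*} [Field F] (q a : F) (n : ℕ) : F :=
  ∏ j ∈ Finset.range n, (1 - a * q ^ j)

/-- The q-binomial coefficient `[n choose i]_q`, equal to 0 when `i > n`. -/
def qBinom {F : Type*} [Field F] (q : F) (n i : ℕ) : F :=
  if i ≤ n then qPoch q q n / (qPoch q q i * qPoch q q (n - i)) else 0

/-- The q-integer `[n]_q = (1-q^n)/(1-q)`. -/
def qInt {F : Type*} [Field F] (q : F) (n : ℕ) : F := (1 - q ^ n) / (1 - q)

/-- The q-dual sequence `a*_n = ∑_{i=0}^n (-1)^i [n choose i]_q q^{i(i-1)/2} a_i`. -/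
def qDual {F : Type*} [Field F] (q : F) (a : ℕ → F) (n : ℕ) : F :=
  ∑ i ∈ Finset.range (n + 1), (-1 : F) ^ i * qBinom q n i * q ^ (i.choose 2) * a i

namespace QDual

variable {F : Type*} [Field F] {q : F}

lemma choose_two_succ (n : ℕ) : (n + 1).choose 2 = n.choose 2 + n := by
  rw [Nat.choose_succ_succ', Nat.choose_one_right, add_comm]

lemma one_sub_pow_ne_zero (hq : ¬IsOfFinOrder q) {m : ℕ} (hm : m ≠ 0) : 1 - q ^ m ≠ 0 :=
  sub_ne_zero.mpr fun h =>
    hq (isOfFinOrder_iff_pow_eq_one.mpr ⟨m, Nat.pos_of_ne_zero hm, h.symm⟩)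

lemma qPoch_self_succ (n : ℕ) : qPoch q q (n + 1) = qPoch q q n * (1 - q ^ (n + 1)) := by
  unfold qPoch; rw [Finset.prod_range_succ, pow_succ']

lemma qPoch_zero (a : F) : qPoch q a 0 = 1 := Finset.prod_range_zero _

lemma qPoch_self_ne_zero (hq : ¬IsOfFinOrder q) (n : ℕ) : qPoch q q n ≠ 0 :=
  Finset.prod_ne_zero_iff.mpr fun j _ => by
    rw [← pow_succ']; exact one_sub_pow_ne_zero hq j.succ_ne_zero

lemma qInt_ne_zero (hq : ¬IsOfFinOrder q) {n : ℕ} (hn : n ≠ 0) : qInt q n ≠ 0 := by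
  refine div_ne_zero (one_sub_pow_ne_zero hq hn) ?_
  simpa using one_sub_pow_ne_zero hq one_ne_zero

lemma qBinom_eq {n i j : ℕ} (h : i + j = n) :
    qBinom q n i = qPoch q q n / (qPoch q q i * qPoch q q j) := by
  rw [qBinom, if_pos (by omega), show n - i = j by omega]

lemma qBinom_of_lt {n i : ℕ} (h : n < i) : qBinom q n i = 0 := if_neg (by omega)

lemma qBinom_zero_right (hq : ¬IsOfFinOrder q) (n : ℕ) : qBinom q n 0 = 1 := by
  rw [qBinom_eq (zero_add n), qPoch_zero, one_mul,
    div_self (qPoch_self_ne_zero hq n)]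

lemma qBinom_self (hq : ¬IsOfFinOrder q) (n : ℕ) : qBinom q n n = 1 := by
  rw [qBinom_eq (add_zero n), qPoch_zero, mul_one,
    div_self (qPoch_self_ne_zero hq n)]

lemma qBinom_succ_succ (hq : ¬IsOfFinOrder q) (n i : ℕ) :
    qBinom q (n + 1) (i + 1) = q ^ (i + 1) * qBinom q n (i + 1) + qBinom q n i := by
  rcases lt_trichotomy i n with h | rfl | h
  · obtain ⟨d, rfl⟩ : ∃ d, n = i + 1 + d := ⟨n - i - 1, by omega⟩
    rw [qBinom_eq (j := d + 1) (by omega), qBinom_eq (n := i + 1 + d) (j := d) rfl,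
      qBinom_eq (j := d + 1) (by omega), qPoch_self_succ (i + 1 + d), qPoch_self_succ i,
      qPoch_self_succ d]
    have := qPoch_self_ne_zero hq
    have := one_sub_pow_ne_zero hq (m := i + 1) (by omega)
    have := one_sub_pow_ne_zero hq (m := d + 1) (by omega)
    field_simp
    ring
  · rw [qBinom_self hq, qBinom_self hq, qBinom_of_lt (Nat.lt_succ_self i), mul_zero, zero_add]
  · rw [qBinom_of_lt (by omega), qBinom_of_lt (by omega), qBinom_of_lt h, mul_zero, zero_add]

lemma qBinom_succ_succ' (hq : ¬IsOfFinOrder q) (n i : ℕ) :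
    qBinom q (n + 1) (i + 1) = qBinom q n (i + 1) + q ^ (n - i) * qBinom q n i := by
  rcases lt_trichotomy i n with h | rfl | h
  · obtain ⟨d, rfl⟩ : ∃ d, n = i + 1 + d := ⟨n - i - 1, by omega⟩
    rw [qBinom_eq (j := d + 1) (by omega), qBinom_eq (n := i + 1 + d) (j := d) rfl,
      qBinom_eq (j := d + 1) (by omega), show i + 1 + d - i = d + 1 by omega,
      qPoch_self_succ (i + 1 + d), qPoch_self_succ i, qPoch_self_succ d]
    have := qPoch_self_ne_zero hq
    have := one_sub_pow_ne_zero hq (m := i + 1) (by omega)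
    have := one_sub_pow_ne_zero hq (m := d + 1) (by omega)
    field_simp
    ring
  · rw [qBinom_self hq, qBinom_self hq, qBinom_of_lt (Nat.lt_succ_self i), Nat.sub_self,
      pow_zero, one_mul, zero_add]
  · rw [qBinom_of_lt (by omega), qBinom_of_lt (by omega), qBinom_of_lt h, mul_zero, add_zero]

lemma qBinom_succ_succ_mul_qInt (hq : ¬IsOfFinOrder q) {n i : ℕ} (h : i ≤ n) :
    qBinom q (n + 1) (i + 1) * qInt q (i + 1) = qInt q (n + 1) * qBinom q n i := by
  obtain ⟨d, rfl⟩ : ∃ d, n = i + d := ⟨n - i, by omega⟩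
  rw [qBinom_eq (j := d) (by omega), qBinom_eq rfl, qInt, qInt, qPoch_self_succ (i + d),
    qPoch_self_succ i]
  have := qPoch_self_ne_zero hq
  have := one_sub_pow_ne_zero hq (m := i + 1) (by omega)
  have := one_sub_pow_ne_zero hq (m := 1) one_ne_zero
  rw [pow_one] at this
  field_simp

lemma sum_qBinom_succ_mul (hq : ¬IsOfFinOrder q) (n : ℕ) (f : ℕ → F) :
    ∑ j ∈ range (n + 2), qBinom q (n + 1) j * f j =
      ∑ j ∈ range (n + 1), qBinom q n j * (q ^ j * f j + f (j + 1)) := by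
  have htop : ∑ j ∈ range (n + 1), qBinom q n (j + 1) * (q ^ (j + 1) * f (j + 1)) =
      ∑ j ∈ range n, qBinom q n (j + 1) * (q ^ (j + 1) * f (j + 1)) := by
    rw [sum_range_succ, qBinom_of_lt (Nat.lt_succ_self n), zero_mul, add_zero]
  simp only [mul_add, sum_add_distrib]
  rw [sum_range_succ', sum_range_succ' (fun j => qBinom q n j * (q ^ j * f j)), ← htop,
    qBinom_zero_right hq, qBinom_zero_right hq]
  simp only [qBinom_succ_succ hq, add_mul, sum_add_distrib, pow_zero]
  ring_nf

lemma sum_qBinom_succ_mul' (hq : ¬IsOfFinOrder q) (n : ℕ) (f : ℕ → F) :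
    ∑ j ∈ range (n + 2), qBinom q (n + 1) j * f j =
      ∑ j ∈ range (n + 1), qBinom q n j * (f j + q ^ (n - j) * f (j + 1)) := by
  have htop : ∑ j ∈ range (n + 1), qBinom q n (j + 1) * f (j + 1) =
      ∑ j ∈ range n, qBinom q n (j + 1) * f (j + 1) := by
    rw [sum_range_succ, qBinom_of_lt (Nat.lt_succ_self n), zero_mul, add_zero]
  simp only [mul_add, sum_add_distrib]
  rw [sum_range_succ', sum_range_succ' (fun j => qBinom q n j * f j), ← htop,
    qBinom_zero_right hq, qBinom_zero_right hq]
  simp only [qBinom_succ_succ' hq, add_mul, sum_add_distrib]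
  ring_nf

def dualSum (q : F) (b : ℕ → F) (k l : ℕ) : F :=
  ∑ j ∈ range (l + 1), qBinom q l j *
    ((-1) ^ j * (b (k + j + 1) * q ^ (((j + 1).choose 2 : ℤ) - (l : ℤ) * ((k : ℤ) + j + 1))))

def seqSum (q : F) (b : ℕ → F) (k l : ℕ) : F :=
  ∑ j ∈ range (k + 1), qBinom q k j * ((-1) ^ j * (b (l + j + 1) * q ^ (j + 1).choose 2))

/-- The q-Beta value `B_q(k+1, l+1) = [k]_q! [l]_q! / [k+l+1]_q!`. -/
def qBeta (q : F) (k l : ℕ) : F := (qInt q (k + l + 1) * qBinom q (k + l) k)⁻¹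

lemma eq_of_recurrence {f g : ℕ → ℕ → F} (hq0 : q ≠ 0)
    (hf : ∀ k l, q ^ (k + 1) * f k (l + 1) = f k l - f (k + 1) l)
    (hg : ∀ k l, q ^ (k + 1) * g k (l + 1) = g k l - g (k + 1) l)
    (h0 : ∀ k, f k 0 = g k 0) (k l : ℕ) : f k l = g k l := by
  induction l generalizing k with
  | zero => exact h0 k
  | succ l ih => exact mul_left_cancel₀ (pow_ne_zero _ hq0) (by rw [hf, hg, ih, ih])

lemma dualSum_succ_right (hq0 : q ≠ 0) (hq : ¬IsOfFinOrder q) (b : ℕ → F) (k l : ℕ) :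
    q ^ (k + 1) * dualSum q b k (l + 1) = dualSum q b k l - dualSum q b (k + 1) l := by
  rw [dualSum, sum_qBinom_succ_mul hq, mul_sum, dualSum, dualSum, ← sum_sub_distrib]
  refine sum_congr rfl fun j _ => ?_
  have hz1 : q ^ (k + 1) * q ^ j *
      q ^ (((j + 1).choose 2 : ℤ) - ((l + 1 : ℕ) : ℤ) * ((k : ℤ) + j + 1)) =
      q ^ (((j + 1).choose 2 : ℤ) - (l : ℤ) * ((k : ℤ) + j + 1)) := by
    rw [← zpow_natCast q (k + 1), ← zpow_natCast q j, ← zpow_add₀ hq0, ← zpow_add₀ hq0]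
    congr 1
    push_cast
    ring
  have hz2 : q ^ (k + 1) *
      q ^ (((j + 1 + 1).choose 2 : ℤ) - ((l + 1 : ℕ) : ℤ) * ((k : ℤ) + (j + 1 : ℕ) + 1)) =
      q ^ (((j + 1).choose 2 : ℤ) - (l : ℤ) * ((k + 1 : ℕ) + (j : ℤ) + 1)) := by
    rw [← zpow_natCast q (k + 1), ← zpow_add₀ hq0, choose_two_succ (j + 1)]
    congr 1
    push_cast
    ring
  rw [show k + (j + 1) + 1 = k + 1 + j + 1 by omega]
  linear_combination (qBinom q l j * (-1) ^ j * b (k + j + 1)) * hz1 -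
    (qBinom q l j * (-1) ^ j * b (k + 1 + j + 1)) * hz2

lemma seqSum_succ_right (hq : ¬IsOfFinOrder q) (b : ℕ → F) (k l : ℕ) :
    q ^ (k + 1) * seqSum q b k (l + 1) = seqSum q b k l - seqSum q b (k + 1) l := by
  simp only [seqSum]
  rw [sum_qBinom_succ_mul' hq, mul_sum, ← sum_sub_distrib]
  refine sum_congr rfl fun j hj => ?_
  have hexp : q ^ (k - j) * q ^ (j + 1 + 1).choose 2 = q ^ (k + 1) * q ^ (j + 1).choose 2 := by
    rw [← pow_add, ← pow_add, choose_two_succ (j + 1)]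
    congr 1
    have := mem_range.mp hj
    omega
  rw [show l + (j + 1) + 1 = l + 1 + j + 1 by omega]
  linear_combination -(qBinom q k j * (-1) ^ j * b (l + 1 + j + 1)) * hexp

lemma qBeta_eq (k l : ℕ) :
    qBeta q k l = (1 - q) * qPoch q q k * qPoch q q l / qPoch q q (k + l + 1) := by
  rw [qBeta, qBinom_eq rfl, qInt, qPoch_self_succ]
  field_simp

lemma qBeta_succ_right (hq : ¬IsOfFinOrder q) (k l : ℕ) :
    q ^ (k + 1) * qBeta q k (l + 1) = qBeta q k l - qBeta q (k + 1) l := by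
  rw [qBeta_eq, qBeta_eq, qBeta_eq, show k + 1 + l + 1 = k + (l + 1) + 1 by omega,
    qPoch_self_succ (k + (l + 1)), qPoch_self_succ k, qPoch_self_succ l,
    show k + (l + 1) = k + l + 1 by omega]
  have := qPoch_self_ne_zero hq
  have := one_sub_pow_ne_zero hq (m := k + l + 2) (by omega)
  field_simp
  ring

lemma qBeta_zero_right (hq : ¬IsOfFinOrder q) (k : ℕ) : qBeta q k 0 = (qInt q (k + 1))⁻¹ := by
  rw [qBeta, add_zero, qBinom_self hq, mul_one]

lemma dualSum_zero_right (hq : ¬IsOfFinOrder q) (b : ℕ → F) (k : ℕ) :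
    dualSum q b k 0 = b (k + 1) := by
  simp [dualSum, qBinom_zero_right hq]

lemma qDual_succ (hq : ¬IsOfFinOrder q) (a : ℕ → F) (n : ℕ) :
    qDual q a (n + 1) = a 0 - qInt q (n + 1) * seqSum q (fun m => a m / qInt q m) n 0 := by
  rw [qDual, sum_range_succ', seqSum, mul_sum, qBinom_zero_right hq, add_comm,
    sub_eq_add_neg, ← sum_neg_distrib]
  simp only [zero_add, pow_zero, Nat.choose_zero_succ, one_mul]
  congr 1
  refine sum_congr rfl fun j hj => ?_
  rw [← mul_assoc, ← qBinom_succ_succ_mul_qInt hq (Nat.lt_succ_iff.mp (mem_range.mp hj))]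
  have := qInt_ne_zero hq j.succ_ne_zero
  field_simp
  ring

lemma dualSum_add_seqSum_zero_right (hq : ¬IsOfFinOrder q) (a : ℕ → F) (k : ℕ) :
    dualSum q (fun n => qDual q a n / qInt q n) k 0 + seqSum q (fun n => a n / qInt q n) k 0 =
      a 0 * qBeta q k 0 := by
  rw [dualSum_zero_right hq, qDual_succ hq, qBeta_zero_right hq]
  have := qInt_ne_zero hq k.succ_ne_zero
  field_simp
  ring

end QDual

open QDual in
theorem stmt0 {F : Type*} [Field F] (q : F) (hq0 : q ≠ 0)
    (hq : ∀ m : ℕ, 0 < m → q ^ m ≠ 1) (a : ℕ → F) (k l : ℕ) :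
    (∑ j ∈ Finset.range (l + 1), qBinom q l j * (-1 : F) ^ j *
        (qDual q a (k + j + 1) / qInt q (k + j + 1)) *
        q ^ (((j + 1).choose 2 : ℤ) - (l : ℤ) * ((k : ℤ) + j + 1))) +
      (∑ j ∈ Finset.range (k + 1), qBinom q k j * (-1 : F) ^ j *
        (a (l + j + 1) / qInt q (l + j + 1)) * q ^ ((j + 1).choose 2)) =
    a 0 / (qInt q (k + l + 1) * qBinom q (k + l) k) := by
  have hq' : ¬IsOfFinOrder q := fun h =>
    let ⟨m, hm, hqm⟩ := isOfFinOrder_iff_pow_eq_one.mp h; hq m hm hqm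
  have key := eq_of_recurrence hq0
    (f := fun k l => dualSum q (fun n => qDual q a n / qInt q n) k l +
      seqSum q (fun n => a n / qInt q n) k l)
    (g := fun k l => a 0 * qBeta q k l)
    (fun k l => by
      linear_combination dualSum_succ_right hq0 hq' _ k l + seqSum_succ_right hq' _ k l)
    (fun k l => by linear_combination a 0 * qBeta_succ_right hq' k l)
    (dualSum_add_seqSum_zero_right hq' a) k l
  simp only [dualSum, seqSum, qBeta, ← div_eq_mul_inv] at key
  simpa only [mul_assoc] using key
end

section
/- For all natural numbers k and l, the following identity holds: Σ_{j=0}^{l} [l choose j]_q (-1)^j a*_{k+j} q^{j(j+1)/2 - l(k+j)} = Σ_{j=0}^{k} [k choose j]_q (-1)^j a_{l+j} q^{j(j-1)/2}. -/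
open Finset

section aux

variable {F : Type*} [Field F]

lemma qPoch_succ (q a : F) (n : ℕ) : qPoch q a (n+1) = qPoch q a n * (1 - a * q ^ n) :=
  Finset.prod_range_succ _ _

lemma qPoch_zero (q a : F) : qPoch q a 0 = 1 := Finset.prod_range_zero _

lemma factor_ne {q : F} (hq : ∀ m : ℕ, 0 < m → q ^ m ≠ 1) (j : ℕ) :
    (1 : F) - q * q ^ j ≠ 0 := by
  have h := hq (j+1) j.succ_pos
  rw [sub_ne_zero]
  intro hcon
  exact h (by rw [pow_succ']; exact hcon.symm)

lemma qPoch_ne {q : F} (hq : ∀ m : ℕ, 0 < m → q ^ m ≠ 1) (n : ℕ) : qPoch q q n ≠ 0 := by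
  unfold qPoch
  exact Finset.prod_ne_zero_iff.mpr fun j _ => factor_ne hq j

lemma qBinom_zero {q : F} (hq : ∀ m : ℕ, 0 < m → q ^ m ≠ 1) (n : ℕ) : qBinom q n 0 = 1 := by
  unfold qBinom
  rw [if_pos (Nat.zero_le n), qPoch_zero, Nat.sub_zero, one_mul, div_self (qPoch_ne hq n)]

lemma qBinom_self {q : F} (hq : ∀ m : ℕ, 0 < m → q ^ m ≠ 1) (n : ℕ) : qBinom q n n = 1 := by
  unfold qBinom
  rw [if_pos le_rfl, Nat.sub_self, qPoch_zero, mul_one, div_self (qPoch_ne hq n)]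

lemma qBinom_of_lt (q : F) {n i : ℕ} (h : n < i) : qBinom q n i = 0 := by
  unfold qBinom; rw [if_neg (by omega)]

lemma pascal1 {q : F} (hq : ∀ m : ℕ, 0 < m → q ^ m ≠ 1) (l j : ℕ) :
    qBinom q (l+1) (j+1) = q ^ (j+1) * qBinom q l (j+1) + qBinom q l j := by
  rcases lt_trichotomy j l with hjl | rfl | hjl
  · obtain ⟨m, rfl⟩ : ∃ m, l = j + 1 + m := ⟨l - (j+1), by omega⟩
    unfold qBinom
    rw [if_pos (by omega), if_pos (by omega), if_pos (by omega)]
    rw [show j + 1 + m + 1 - (j+1) = m + 1 from by omega,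
        show j + 1 + m - (j+1) = m from by omega,
        show j + 1 + m - j = m + 1 from by omega]
    have h1 := qPoch_ne hq (n := j)
    have h2 := qPoch_ne hq (n := m)
    have h3 := qPoch_ne hq (n := j+1+m)
    have h4 := factor_ne hq j
    have h5 := factor_ne hq m
    simp only [qPoch_succ]
    field_simp
    ring
  · rw [qBinom_self hq, qBinom_of_lt q (by omega), mul_zero, zero_add, qBinom_self hq]
  · rw [qBinom_of_lt q (by omega), qBinom_of_lt q (by omega), qBinom_of_lt q (by omega)]; ring

lemma pascal2 {q : F} (hq : ∀ m : ℕ, 0 < m → q ^ m ≠ 1) (k j : ℕ) :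
    qBinom q (k+1) (j+1) = qBinom q k (j+1) + q ^ (k - j) * qBinom q k j := by
  rcases lt_trichotomy j k with hjk | rfl | hjk
  · obtain ⟨m, rfl⟩ : ∃ m, k = j + 1 + m := ⟨k - (j+1), by omega⟩
    unfold qBinom
    rw [if_pos (by omega), if_pos (by omega), if_pos (by omega)]
    rw [show j + 1 + m + 1 - (j+1) = m + 1 from by omega,
        show j + 1 + m - (j+1) = m from by omega,
        show j + 1 + m - j = m + 1 from by omega]
    have h1 := qPoch_ne hq (n := j)
    have h2 := qPoch_ne hq (n := m)
    have h3 := qPoch_ne hq (n := j+1+m)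
    have h4 := factor_ne hq j
    have h5 := factor_ne hq m
    simp only [qPoch_succ]
    field_simp
    ring
  · rw [Nat.sub_self, pow_zero, one_mul, qBinom_self hq, qBinom_of_lt q (by omega),
      zero_add, qBinom_self hq]
  · rw [qBinom_of_lt q (by omega), qBinom_of_lt q (by omega), qBinom_of_lt q (by omega)]; ring

lemma choose2_succ (i : ℕ) : (i+1).choose 2 = i.choose 2 + i := by
  rw [Nat.choose_succ_succ i 1, Nat.choose_one_right]
  norm_num [Nat.add_comm]

/-- The right-hand side of the identity, as a function of `k` and `l`. -/
def Tsum (q : F) (a : ℕ → F) (k l : ℕ) : F :=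
  ∑ j ∈ Finset.range (k+1), qBinom q k j * (-1:F)^j * a (l+j) * q ^ (j.choose 2)

lemma T_rec {q : F} (hq : ∀ m : ℕ, 0 < m → q ^ m ≠ 1) (a : ℕ → F) (k l : ℕ) :
    Tsum q a k l - Tsum q a (k+1) l = q ^ k * Tsum q a k (l+1) := by
  simp only [Tsum]
  have hpad : (∑ j ∈ Finset.range (k+1+1), qBinom q k j * (-1:F)^j * a (l+j) * q ^ (j.choose 2))
      = ∑ j ∈ Finset.range (k+1), qBinom q k j * (-1:F)^j * a (l+j) * q ^ (j.choose 2) := by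
    rw [Finset.sum_range_succ, qBinom_of_lt q (by omega : k < k+1)]
    ring
  rw [← hpad, Finset.mul_sum, ← Finset.sum_sub_distrib, Finset.sum_range_succ']
  have h00 : qBinom q k 0 * (-1:F)^0 * a (l+0) * q ^ ((0:ℕ).choose 2)
      - qBinom q (k+1) 0 * (-1:F)^0 * a (l+0) * q ^ ((0:ℕ).choose 2) = 0 := by
    rw [qBinom_zero hq, qBinom_zero hq]; ring
  rw [h00, add_zero]
  refine Finset.sum_congr rfl fun i hi => ?_
  have hik : i ≤ k := by have := Finset.mem_range.mp hi; omega
  obtain ⟨m, rfl⟩ : ∃ m, k = i + m := ⟨k - i, by omega⟩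
  rw [pascal2 hq, choose2_succ, show i + m - i = m from by omega,
    show l + (i+1) = l + 1 + i from by omega]
  ring

/-- The left-hand side of the identity, multiplied by `q^(l*(k+l))` so that all
exponents become natural numbers. -/
def Spr (q : F) (a : ℕ → F) (k l : ℕ) : F :=
  ∑ j ∈ Finset.range (l+1), qBinom q l j * (-1:F)^j * qDual q a (k+j) *
    q ^ ((j+1).choose 2 + l*(l-j))

lemma Spr_rec {q : F} (hq : ∀ m : ℕ, 0 < m → q ^ m ≠ 1) (a : ℕ → F) (k l : ℕ) :
    Spr q a k (l+1) = q^(2*l+1) * Spr q a k l - q^(l+1) * Spr q a (k+1) l := by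
  simp only [Spr]
  rw [Finset.sum_range_succ']
  have key : ∀ i ∈ Finset.range (l+1),
      qBinom q (l+1) (i+1) * (-1:F)^(i+1) * qDual q a (k+(i+1)) *
        q ^ ((i+1+1).choose 2 + (l+1)*((l+1)-(i+1)))
      = q^(2*l+1) * (qBinom q l (i+1) * (-1:F)^(i+1) * qDual q a (k+(i+1)) *
          q ^ ((i+1+1).choose 2 + l*(l-(i+1))))
        - q^(l+1) * (qBinom q l i * (-1:F)^i * qDual q a (k+1+i) *
          q ^ ((i+1).choose 2 + l*(l-i))) := by
    intro i hi
    have hil : i ≤ l := by have := Finset.mem_range.mp hi; omega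
    rw [pascal1 hq l i, show k+(i+1) = k+1+i from by omega]
    rcases eq_or_lt_of_le hil with rfl | hlt
    · rw [qBinom_of_lt q (show i < i+1 by omega), choose2_succ (i+1),
        show i+1-(i+1) = 0 from by omega, show i - (i+1) = 0 from by omega,
        show i - i = 0 from by omega]
      ring
    · obtain ⟨m, rfl⟩ : ∃ m, l = i + 1 + m := ⟨l - (i+1), by omega⟩
      rw [show i+1+m+1-(i+1) = m+1 from by omega, show i+1+m-(i+1) = m from by omega,
        show i+1+m-i = m+1 from by omega, choose2_succ (i+1)]
      ring
  rw [Finset.sum_congr rfl key, Finset.sum_sub_distrib, ← Finset.mul_sum, ← Finset.mul_sum]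
  have hg : (∑ i ∈ Finset.range (l+1), qBinom q l (i+1) * (-1:F)^(i+1) * qDual q a (k+(i+1)) *
      q ^ ((i+1+1).choose 2 + l*(l-(i+1))))
      = (∑ j ∈ Finset.range (l+1), qBinom q l j * (-1:F)^j * qDual q a (k+j) *
        q ^ ((j+1).choose 2 + l*(l-j)))
        - qBinom q l 0 * (-1:F)^0 * qDual q a (k+0) * q ^ ((0+1).choose 2 + l*(l-0)) := by
    rw [eq_sub_iff_add_eq,
      ← Finset.sum_range_succ' (fun j => qBinom q l j * (-1:F)^j * qDual q a (k+j) *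
        q ^ ((j+1).choose 2 + l*(l-j))) (l+1),
      Finset.sum_range_succ, qBinom_of_lt q (show l < l+1 by omega)]
    ring
  rw [hg, qBinom_zero hq, qBinom_zero hq, Nat.sub_zero, Nat.sub_zero,
    show (l+1)*(l+1) = 2*l+1 + l*l from by ring]
  ring

lemma main_id {q : F} (hq : ∀ m : ℕ, 0 < m → q ^ m ≠ 1) (a : ℕ → F) :
    ∀ l k, Spr q a k l = q ^ (l*(k+l)) * Tsum q a k l := by
  intro l
  induction l with
  | zero =>
    intro k
    rw [show (0:ℕ)*(k+0) = 0 from by ring, pow_zero, one_mul]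
    simp only [Spr]
    rw [Finset.sum_range_one, qBinom_zero hq,
      show ((0+1 : ℕ).choose 2 + 0*(0-0)) = 0 from rfl, Nat.add_zero]
    simp only [pow_zero, one_mul, mul_one, qDual, Tsum]
    refine Finset.sum_congr rfl fun i _ => ?_
    rw [Nat.zero_add]
    ring
  | succ l ih =>
    intro k
    rw [Spr_rec hq a k l, ih k, ih (k+1)]
    linear_combination (q^(2*l+1 + l*(k+l))) * (T_rec hq a k l)

end aux

theorem stmt1 {F : Type*} [Field F] (q : F) (hq0 : q ≠ 0)
    (hq : ∀ m : ℕ, 0 < m → q ^ m ≠ 1) (a : ℕ → F) (k l : ℕ) :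
    ∑ j ∈ Finset.range (l + 1), qBinom q l j * (-1 : F) ^ j * qDual q a (k + j) *
        q ^ (((j + 1).choose 2 : ℤ) - (l : ℤ) * ((k : ℤ) + j)) =
    ∑ j ∈ Finset.range (k + 1), qBinom q k j * (-1 : F) ^ j * a (l + j) *
        q ^ (j.choose 2) := by
  apply mul_left_cancel₀ (pow_ne_zero (l*(k+l)) hq0)
  have h1 : q ^ (l*(k+l)) * (∑ j ∈ Finset.range (l + 1),
      qBinom q l j * (-1 : F) ^ j * qDual q a (k + j) *
        q ^ (((j + 1).choose 2 : ℤ) - (l : ℤ) * ((k : ℤ) + j))) = Spr q a k l := by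
    rw [Finset.mul_sum, Spr]
    refine Finset.sum_congr rfl fun j hj => ?_
    have hjl : j ≤ l := by have := Finset.mem_range.mp hj; omega
    have he : (q : F) ^ (l*(k+l)) * q ^ (((j + 1).choose 2 : ℤ) - (l : ℤ) * ((k : ℤ) + j))
        = q ^ ((j+1).choose 2 + l*(l-j)) := by
      rw [← zpow_natCast q (l*(k+l)), ← zpow_natCast q ((j+1).choose 2 + l*(l-j)),
        ← zpow_add₀ hq0]
      congr 1
      push_cast [Nat.cast_sub hjl]
      ring
    linear_combination (qBinom q l j * (-1:F)^j * qDual q a (k+j)) * he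
  rw [h1, main_id hq a l k, Tsum]
end

section
/- Let (a_n) be a sequence in F with q-dual sequence (a*_n), and define the sequence (b_n) by b_0 = 0 and b_n = -q^{1-n} [n]_q a_{n-1} for n ≥ 1. Then the q-dual sequence (b*_n) of (b_n) satisfies b*_0 = 0 and b*_n = [n]_q a*_{n-1} for all n ≥ 1. -/
open Finset

/-! The identity holds term by term. After the shift `i ↦ i + 1`, the factor `q^{-i}` in `b_{i+1}`
cancels against `q^{C(i+1,2)} = q^i q^{C(i,2)}`, and the absorption identity
`[n choose i+1]_q [i+1]_q = [n]_q [n-1 choose i]_q` produces the factor `[n]_q`. -/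

section QBinom

variable {F : Type*} [Field F] (q : F)

lemma qPoch_self_succ (n : ℕ) : qPoch q q (n + 1) = qPoch q q n * (1 - q ^ (n + 1)) := by
  rw [qPoch, prod_range_succ, ← qPoch, pow_succ']

lemma qPoch_self_eq_zero {j n : ℕ} (hjn : j < n) (hq : q ^ (j + 1) = 1) : qPoch q q n = 0 :=
  prod_eq_zero (mem_range.mpr hjn) (by rw [← pow_succ', hq, sub_self])

/- When `q^{j+1} = 1` both sides vanish, the right one through a factor of `(q;q)_n` or through
`1 - q^{n+1}` itself. -/
lemma qBinom_succ_succ_mul (n j : ℕ) :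
    qBinom q (n + 1) (j + 1) * (1 - q ^ (j + 1)) = (1 - q ^ (n + 1)) * qBinom q n j := by
  by_cases hjn : j ≤ n
  swap
  · simp [qBinom, hjn]
  rw [qBinom, qBinom, if_pos (Nat.succ_le_succ hjn), if_pos hjn, Nat.succ_sub_succ,
    qPoch_self_succ, qPoch_self_succ]
  by_cases hx : 1 - q ^ (j + 1) = 0
  · rw [hx, mul_zero]
    rcases hjn.lt_or_eq with hlt | rfl
    · rw [qPoch_self_eq_zero q hlt (sub_eq_zero.mp hx).symm]; simp
    · rw [hx, zero_mul]
  · rw [mul_assoc (qPoch q q j), mul_comm (1 - q ^ (j + 1)), ← mul_assoc, ← div_div,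
      div_mul_cancel₀ _ hx]
    ring

lemma qBinom_succ_succ_mul_qInt (n j : ℕ) :
    qBinom q (n + 1) (j + 1) * qInt q (j + 1) = qInt q (n + 1) * qBinom q n j := by
  simp only [qInt, ← mul_div_assoc, qBinom_succ_succ_mul, div_mul_eq_mul_div]

end QBinom

theorem stmt12_general {F : Type*} [Field F] (q : F) (hq0 : q ≠ 0)
    (a b : ℕ → F) (hb0 : b 0 = 0)
    (hb : ∀ n : ℕ, 1 ≤ n → b n = -q ^ (1 - (n : ℤ)) * qInt q n * a (n - 1)) :
    qDual q b 0 = 0 ∧ ∀ n : ℕ, 1 ≤ n → qDual q b n = qInt q n * qDual q a (n - 1) := by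
  refine ⟨by simp [qDual, hb0], fun n hn => ?_⟩
  obtain ⟨m, rfl⟩ : ∃ m, n = m + 1 := ⟨n - 1, by omega⟩
  rw [qDual, sum_range_succ', hb0, mul_zero, add_zero, Nat.add_sub_cancel, qDual, mul_sum]
  refine sum_congr rfl fun i _ => ?_
  have hb_succ : b (i + 1) = -(q ^ i)⁻¹ * qInt q (i + 1) * a i := by
    rw [hb (i + 1) (Nat.le_add_left 1 i), Nat.add_sub_cancel, Nat.cast_succ,
      show (1 : ℤ) - (i + 1) = -i by ring, zpow_neg, zpow_natCast]
  have hchoose : (i + 1).choose 2 = i + i.choose 2 := by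
    rw [Nat.choose_succ_succ, Nat.choose_one_right]
  have hqi : q ^ i * (q ^ i)⁻¹ = 1 := mul_inv_cancel₀ (pow_ne_zero i hq0)
  rw [hb_succ, hchoose, pow_add]
  linear_combination (-1) ^ i * q ^ i.choose 2 * a i *
    (qBinom q (m + 1) (i + 1) * qInt q (i + 1) * hqi + qBinom_succ_succ_mul_qInt q m i)

theorem stmt12 {F : Type*} [Field F] (q : F) (hq0 : q ≠ 0)
    (hq : ∀ m : ℕ, 0 < m → q ^ m ≠ 1) (a b : ℕ → F) (hb0 : b 0 = 0)
    (hb : ∀ n : ℕ, 1 ≤ n → b n = -q ^ (1 - (n : ℤ)) * qInt q n * a (n - 1)) :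
    qDual q b 0 = 0 ∧ ∀ n : ℕ, 1 ≤ n → qDual q b n = qInt q n * qDual q a (n - 1) :=
  stmt12_general q hq0 a b hb0 hb
end

section
/- For every natural number n and all x, z ∈ F: Σ_{i=0}^n (-1)^i [n choose i]_q q^{i(i-1)/2} a_i [1,-z,-x]^{n-i} = (-1)^n Σ_{j=0}^n [n choose j]_q x^j A*_{n-j}(z). In other words, A_n([1,-z,-x]) = (-1)^n Σ_{j=0}^n [n choose j]_q x^j A*_{n-j}(z). -/
open Finset

/-- The q-factorial `[n]_q! = ∏_{j=1}^n [j]_q`. -/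
def qFact {F : Type*} [Field F] (q : F) (n : ℕ) : F :=
  ∏ j ∈ Finset.range n, qInt q (j + 1)

/-- `[u,v,w]^n = ∑_{i+j+k=n} ([n]_q!/([i]_q![j]_q![k]_q!)) u^i v^j w^k`. -/
def qBracket3 {F : Type*} [Field F] (q : F) (n : ℕ) (u v w : F) : F :=
  ∑ i ∈ Finset.range (n + 1), ∑ j ∈ Finset.range (n + 1 - i),
    qFact q n / (qFact q i * qFact q j * qFact q (n - i - j)) *
      (u ^ i * v ^ j * w ^ (n - i - j))

/-- `A_n(x) = ∑_{i=0}^n (-1)^i [n choose i]_q q^{i(i-1)/2} a_i x^{n-i}`. -/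
def Apoly {F : Type*} [Field F] (q : F) (a : ℕ → F) (n : ℕ) (x : F) : F :=
  ∑ i ∈ Finset.range (n + 1), (-1 : F) ^ i * qBinom q n i * q ^ (i.choose 2) * a i * x ^ (n - i)

/-- `A*_n(x) = ∑_{i=0}^n (-1)^i [n choose i]_q a*_i x^{n-i}`. -/
def AstarPoly {F : Type*} [Field F] (q : F) (a : ℕ → F) (n : ℕ) (x : F) : F :=
  ∑ i ∈ Finset.range (n + 1), (-1 : F) ^ i * qBinom q n i * qDual q a i * x ^ (n - i)

/-- `A_n([1,-z,-x]) = ∑_{i=0}^n (-1)^i [n choose i]_q q^{i(i-1)/2} a_i [1,-z,-x]^{n-i}`. -/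
def ApolyTri {F : Type*} [Field F] (q : F) (a : ℕ → F) (n : ℕ) (z x : F) : F :=
  ∑ i ∈ Finset.range (n + 1), (-1 : F) ^ i * qBinom q n i * q ^ (i.choose 2) * a i *
    qBracket3 q (n - i) 1 (-z) (-x)

/-!
Write `f ⋆ g` for the q-binomial convolution `(f ⋆ g)_n = ∑_i [n choose i]_q f_i g_{n-i}`.
It is the product of q-exponential generating functions `∑ f_n t^n / [n]_q!`, hence commutative
and associative. With `b_i = (-1)^i q^{i(i-1)/2} a_i` and `e_c = (c^k)_k` one has `a* = b ⋆ e_1`,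
`(-1)^m A*_m(z) = (a* ⋆ e_{-z})_m` and `[1,-z,-x]^m = (e_1 ⋆ e_{-z} ⋆ e_{-x})_m`, so both sides of
the identity are the `n`-th term of `b ⋆ e_1 ⋆ e_{-z} ⋆ e_{-x}`.
-/

namespace QBinomial

variable {F : Type*} [Field F] {q : F}

lemma qFact_ne_zero (hq : ∀ m : ℕ, 0 < m → q ^ m ≠ 1) (n : ℕ) : qFact q n ≠ 0 := by
  have h1 : (1 : F) - q ≠ 0 := sub_ne_zero.mpr fun h => hq 1 one_pos (by rw [pow_one, ← h])
  refine prod_ne_zero_iff.mpr fun j _ => div_ne_zero ?_ h1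
  exact sub_ne_zero.mpr fun h => hq (j + 1) j.succ_pos h.symm

lemma qPoch_self_eq_mul_qFact (hq1 : q ≠ 1) (n : ℕ) : qPoch q q n = (1 - q) ^ n * qFact q n := by
  have h1 : (1 : F) - q ≠ 0 := sub_ne_zero.mpr hq1.symm
  have hfactor (j : ℕ) : 1 - q * q ^ j = (1 - q) * qInt q (j + 1) := by
    rw [qInt, pow_succ]
    field_simp
  rw [qPoch, qFact, prod_congr rfl fun j _ => hfactor j, prod_mul_distrib, prod_const, card_range]

lemma qBinom_eq_div (hq : ∀ m : ℕ, 0 < m → q ^ m ≠ 1) {n i : ℕ} (h : i ≤ n) :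
    qBinom q n i = qFact q n / (qFact q i * qFact q (n - i)) := by
  have hq1 : q ≠ 1 := fun h1 => hq 1 one_pos (by rw [pow_one, h1])
  have h1 : (1 : F) - q ≠ 0 := sub_ne_zero.mpr hq1.symm
  have := qFact_ne_zero hq i
  have := qFact_ne_zero hq (n - i)
  simp only [qBinom, if_pos h, qPoch_self_eq_mul_qFact hq1]
  rw [← Nat.add_sub_cancel' h, pow_add, Nat.add_sub_cancel_left]
  field_simp

lemma qBinom_mul_qBinom_eq_div (hq : ∀ m : ℕ, 0 < m → q ^ m ≠ 1) {n i j : ℕ} (h : i + j ≤ n) :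
    qBinom q n i * qBinom q (n - i) j = qFact q n / (qFact q i * qFact q j * qFact q (n - i - j)) := by
  have := qFact_ne_zero hq (n - i)
  rw [qBinom_eq_div hq (by omega), qBinom_eq_div hq (by omega)]
  field_simp

def qConv (q : F) (f g : ℕ → F) (n : ℕ) : F :=
  ∑ i ∈ range (n + 1), qBinom q n i * f i * g (n - i)

def qEGF (q : F) (f : ℕ → F) : PowerSeries F :=
  PowerSeries.mk fun n => f n / qFact q n

lemma qEGF_injective (hq : ∀ m : ℕ, 0 < m → q ^ m ≠ 1) : Function.Injective (qEGF q) := by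
  intro f g h
  funext n
  have hn := congrArg (PowerSeries.coeff n) h
  simp only [qEGF, PowerSeries.coeff_mk] at hn
  exact (div_left_inj' (qFact_ne_zero hq n)).mp hn

lemma qEGF_qConv (hq : ∀ m : ℕ, 0 < m → q ^ m ≠ 1) (f g : ℕ → F) :
    qEGF q (qConv q f g) = qEGF q f * qEGF q g := by
  ext n
  rw [PowerSeries.coeff_mul, Nat.sum_antidiagonal_eq_sum_range_succ
    (fun i j => PowerSeries.coeff i (qEGF q f) * PowerSeries.coeff j (qEGF q g))]
  simp only [qEGF, PowerSeries.coeff_mk, qConv, sum_div]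
  refine sum_congr rfl fun i hi => ?_
  have := qFact_ne_zero hq n
  have := qFact_ne_zero hq i
  have := qFact_ne_zero hq (n - i)
  rw [qBinom_eq_div hq (mem_range_succ_iff.mp hi)]
  field_simp

lemma qConv_comm (hq : ∀ m : ℕ, 0 < m → q ^ m ≠ 1) (f g : ℕ → F) :
    qConv q f g = qConv q g f :=
  qEGF_injective hq (by rw [qEGF_qConv hq, qEGF_qConv hq, mul_comm])

lemma qConv_assoc (hq : ∀ m : ℕ, 0 < m → q ^ m ≠ 1) (f g h : ℕ → F) :
    qConv q (qConv q f g) h = qConv q f (qConv q g h) :=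
  qEGF_injective hq (by simp only [qEGF_qConv hq, mul_assoc])

lemma qDual_eq_qConv (a : ℕ → F) :
    qDual q a = qConv q (fun i => (-1) ^ i * q ^ i.choose 2 * a i) fun _ => 1 := by
  funext n
  exact sum_congr rfl fun i _ => by ring

lemma qBracket3_eq_qConv (hq : ∀ m : ℕ, 0 < m → q ^ m ≠ 1) (m : ℕ) (u v w : F) :
    qBracket3 q m u v w = qConv q (u ^ ·) (qConv q (v ^ ·) (w ^ ·)) m := by
  refine sum_congr rfl fun i hi => ?_
  have hi : i ≤ m := mem_range_succ_iff.mp hi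
  rw [qConv, mul_sum, Nat.sub_add_comm hi]
  refine sum_congr rfl fun j hj => ?_
  rw [← qBinom_mul_qBinom_eq_div hq (by rw [mem_range] at hj; omega), Nat.sub_sub]
  ring

lemma neg_one_pow_mul_AstarPoly (a : ℕ → F) (m : ℕ) (z : F) :
    (-1) ^ m * AstarPoly q a m z = qConv q (qDual q a) ((-z) ^ ·) m := by
  rw [AstarPoly, mul_sum]
  refine sum_congr rfl fun k hk => ?_
  have hsq : ((-1 : F) ^ k) ^ 2 = 1 := by rw [pow_right_comm, neg_one_sq, one_pow]
  rw [← Nat.add_sub_cancel' (mem_range_succ_iff.mp hk), Nat.add_sub_cancel_left,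
    pow_add, neg_pow]
  linear_combination (qBinom q (k + (m - k)) k * qDual q a k * (-1) ^ (m - k) * z ^ (m - k)) * hsq

end QBinomial

open QBinomial in
theorem stmt15_general {F : Type*} [Field F] (q : F)
    (hq : ∀ m : ℕ, 0 < m → q ^ m ≠ 1) (a : ℕ → F) (n : ℕ) (x z : F) :
    ∑ i ∈ Finset.range (n + 1), (-1 : F) ^ i * qBinom q n i * q ^ (i.choose 2) *
        a i * qBracket3 q (n - i) 1 (-z) (-x) =
    (-1 : F) ^ n * ∑ j ∈ Finset.range (n + 1), qBinom q n j * x ^ j *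
        AstarPoly q a (n - j) z := by
  set b : ℕ → F := fun i => (-1) ^ i * q ^ i.choose 2 * a i
  have hlhs : ∑ i ∈ range (n + 1), (-1 : F) ^ i * qBinom q n i * q ^ (i.choose 2) * a i *
      qBracket3 q (n - i) 1 (-z) (-x) =
      qConv q b (qConv q (fun _ => 1) (qConv q ((-z) ^ ·) ((-x) ^ ·))) n := by
    simp only [qBracket3_eq_qConv hq, one_pow]
    exact sum_congr rfl fun i _ => by ring
  have hrhs : (-1 : F) ^ n * ∑ j ∈ range (n + 1), qBinom q n j * x ^ j * AstarPoly q a (n - j) z =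
      qConv q ((-x) ^ ·) (qConv q (qDual q a) ((-z) ^ ·)) n := by
    rw [mul_sum]
    refine sum_congr rfl fun j hj => ?_
    rw [← neg_one_pow_mul_AstarPoly, neg_pow,
      ← Nat.add_sub_cancel' (mem_range_succ_iff.mp hj), Nat.add_sub_cancel_left, pow_add]
    ring
  rw [hlhs, hrhs, qDual_eq_qConv, qConv_comm hq ((-x) ^ ·), qConv_assoc hq, qConv_assoc hq]

theorem stmt15 {F : Type*} [Field F] (q : F) (hq0 : q ≠ 0)
    (hq : ∀ m : ℕ, 0 < m → q ^ m ≠ 1) (a : ℕ → F) (n : ℕ) (x z : F) :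
    ∑ i ∈ Finset.range (n + 1), (-1 : F) ^ i * qBinom q n i * q ^ (i.choose 2) *
        a i * qBracket3 q (n - i) 1 (-z) (-x) =
    (-1 : F) ^ n * ∑ j ∈ Finset.range (n + 1), qBinom q n j * x ^ j *
        AstarPoly q a (n - j) z :=
  stmt15_general q hq a n x z
end
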